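/- arXiv:2310.09493 — 5 statements merged into one kernel-verified Lean document; each statement's English description precedes it below -/
import Mathlib

section
/- Let κ_1, ..., κ_p be random variables such that {κ_j : j ∈ H_0} are i.i.d. uniform on {0,1,...,M} and independent of everything else. Fix an integer v ≥ 1 with 1 - (M/(M+1))^v ≤ α. Let T be any stopping rule such that the set R = {j ≤ T : κ_j = 0} contains at most the null indices with κ_j = 0 occurring before the v-th null index j with κ_j ≠ 0 (in the fixed ordering 1,...,p). Then P(|R ∩ H_0| ≥ 1) ≤ α. -/
/-! Let `S` be the first `v` null indices. If `R` contains a null index `j`, then `κ_j = 0` and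
fewer than `v` null indices before `j` have `κ ≠ 0`; so either `j ∈ S`, or all of `S` precedes `j`
and then some index of `S` must have `κ = 0`. Either way `κ` vanishes somewhere on `S`, an event of
probability `1 - (M/(M+1))^|S| ≤ 1 - (M/(M+1))^v` by independence and uniformity. -/

open MeasureTheory ENNReal ProbabilityTheory

namespace Finset

variable {α : Type*} [LinearOrder α]

def takeLeast (s : Finset α) (n : ℕ) : Finset α :=
  ({i : Fin #s | i < n} : Finset (Fin #s)).map (s.orderEmbOfFin rfl).toEmbedding

variable {s : Finset α} {n : ℕ} {j : α}

theorem takeLeast_subset : s.takeLeast n ⊆ s := by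
  intro i hi
  obtain ⟨k, -, rfl⟩ := mem_map.1 hi
  exact s.orderEmbOfFin_mem rfl k

theorem card_takeLeast : #(s.takeLeast n) = min #s n := by
  rw [takeLeast, card_map, Fin.card_filter_val_lt]

theorem orderEmbOfFin_mem_takeLeast_iff {m : Fin #s} :
    s.orderEmbOfFin rfl m ∈ s.takeLeast n ↔ m < n := by
  simp [takeLeast, -mem_map_equiv]

theorem takeLeast_subset_filter_lt (hj : j ∈ s) (hjn : j ∉ s.takeLeast n) :
    s.takeLeast n ⊆ s.filter (· < j) := by
  obtain ⟨m, rfl⟩ : j ∈ Set.range (s.orderEmbOfFin rfl) := by simpa using hj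
  intro i hi
  obtain ⟨k, hk, rfl⟩ := mem_map.1 hi
  rw [orderEmbOfFin_mem_takeLeast_iff, not_lt] at hjn
  replace hk : (k : ℕ) < n := by simpa using hk
  exact mem_filter.2 ⟨s.orderEmbOfFin_mem rfl k, (s.orderEmbOfFin rfl).strictMono (by omega)⟩

theorem card_takeLeast_of_notMem (hj : j ∈ s) (hjn : j ∉ s.takeLeast n) :
    #(s.takeLeast n) = n := by
  obtain ⟨m, rfl⟩ : j ∈ Set.range (s.orderEmbOfFin rfl) := by simpa using hj
  rw [orderEmbOfFin_mem_takeLeast_iff, not_lt] at hjn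
  rw [card_takeLeast]
  omega

theorem exists_mem_takeLeast_not_of_card_filter_lt {P : α → Prop} [DecidablePred P]
    (hj : j ∈ s) (hPj : ¬P j) (hcard : #(s.filter fun i => i < j ∧ P i) < n) :
    ∃ i ∈ s.takeLeast n, ¬P i := by
  by_contra! hP
  have hjn : j ∉ s.takeLeast n := fun h => hPj (hP j h)
  have hsub : s.takeLeast n ⊆ s.filter fun i => i < j ∧ P i := fun i hi =>
    mem_filter.2 ⟨takeLeast_subset hi, (mem_filter.1 (takeLeast_subset_filter_lt hj hjn hi)).2,
      hP i hi⟩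
  have := card_le_card hsub
  rw [card_takeLeast_of_notMem hj hjn] at this
  omega

end Finset

theorem ProbabilityTheory.iIndepFun.measure_biInter_preimage_eq_pow {ι Ω β : Type*}
    [MeasurableSpace Ω] [MeasurableSpace β] {μ : Measure Ω} {H S : Finset ι} {X : ι → Ω → β}
    (hX : iIndepFun (fun i : H => X i) μ) (hS : S ⊆ H) {B : Set β} (hB : MeasurableSet B)
    {q : ℝ≥0∞} (hq : ∀ i ∈ S, μ (X i ⁻¹' B) = q) :
    μ (⋂ i ∈ S, X i ⁻¹' B) = q ^ S.card := by
  have hXS : iIndepFun (fun i : S => X i) μ :=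
    hX.precomp (g := Set.inclusion hS) (Set.inclusion_injective hS)
  calc μ (⋂ i ∈ S, X i ⁻¹' B) = μ (⋂ i : S, X i ⁻¹' B) := by rw [Set.iInter_subtype]
    _ = ∏ i : S, μ (X i ⁻¹' B) := hXS.meas_iInter fun i => ⟨B, hB, rfl⟩
    _ = q ^ S.card := by
      rw [Finset.prod_congr rfl fun (i : S) _ => hq i i.2, Finset.prod_const, Finset.card_univ,
        Fintype.card_coe]

theorem ENNReal.one_sub_one_div_natCast_add_one (n : ℕ) :
    1 - 1 / ((n : ℝ≥0∞) + 1) = n / (n + 1) := by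
  refine ENNReal.sub_eq_of_eq_add (by simp) ?_
  rw [ENNReal.div_add_div_same, ENNReal.div_self (by simp) (by simp)]

theorem knockoff_filter_fwer_control_general {Ω : Type*} [MeasurableSpace Ω] (μ : Measure Ω)
    [IsProbabilityMeasure μ] (p M v : ℕ)
    (α : ℝ≥0∞) (hα : 1 - ((M : ℝ≥0∞) / ((M : ℝ≥0∞) + 1)) ^ v ≤ α)
    (κ : Fin p → Ω → Fin (M + 1)) (hκmeas : ∀ j, Measurable (κ j))
    (H0 : Finset (Fin p))
    -- the null `κ_j`'s are independent ...
    (hIndep : iIndepFun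
      (fun j : {j : Fin p // j ∈ H0} => κ j) μ)
    -- ... and uniform on `{0,…,M}`, independent of the non-null `κ_j`'s
    (hUnif : ∀ j ∈ H0, ∀ m : Fin (M + 1), μ {ω | κ j ω = m} = 1 / ((M : ℝ≥0∞) + 1))
    (R : Ω → Finset (Fin p))
    -- `R` only contains indices with `κ_j = 0`, and any null index in `R` is preceded by
    -- strictly fewer than `v` null indices with nonzero `κ`
    (hR : ∀ ω, ∀ j ∈ R ω, j ∈ H0 →
      κ j ω = 0 ∧ ((H0.filter fun i => i < j ∧ κ i ω ≠ 0).card < v)) :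
    μ {ω | 1 ≤ (R ω ∩ H0).card} ≤ α := by
  classical
  set S := H0.takeLeast v
  set A := ⋂ j ∈ S, κ j ⁻¹' {0}ᶜ
  have hAmeas : MeasurableSet A :=
    .biInter S.countable_toSet fun j _ => (hκmeas j (measurableSet_singleton 0)).compl
  have hμA : μ A = (M / (M + 1)) ^ S.card := by
    refine hIndep.measure_biInter_preimage_eq_pow Finset.takeLeast_subset
      (measurableSet_singleton 0).compl fun j hj => ?_
    rw [Set.preimage_compl, prob_compl_eq_one_sub (hκmeas j (measurableSet_singleton 0)),
      ← ENNReal.one_sub_one_div_natCast_add_one, ← hUnif j (Finset.takeLeast_subset hj) 0]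
    rfl
  have hsub : {ω | 1 ≤ (R ω ∩ H0).card} ⊆ Aᶜ := by
    intro ω hω hωA
    obtain ⟨j, hj⟩ := Finset.card_pos.1 hω
    obtain ⟨hjR, hjH0⟩ := Finset.mem_inter.1 hj
    obtain ⟨hκj, hcard⟩ := hR ω j hjR hjH0
    obtain ⟨i, hiS, hi⟩ :=
      Finset.exists_mem_takeLeast_not_of_card_filter_lt hjH0 (not_not.2 hκj) hcard
    exact hi (Set.mem_iInter₂.1 hωA i hiS)
  calc μ {ω | 1 ≤ (R ω ∩ H0).card} ≤ μ Aᶜ := measure_mono hsub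
    _ = 1 - (M / (M + 1)) ^ S.card := by rw [prob_compl_eq_one_sub hAmeas, hμA]
    _ ≤ 1 - (M / (M + 1)) ^ v := by
      gcongr 1 - ?_
      exact pow_le_pow_of_le_one zero_le (ENNReal.div_le_of_le_mul (by simp))
        (Finset.card_takeLeast.trans_le (min_le_right _ _))
    _ ≤ α := hα

/-- FWER control of the knockoff FWER filter: if the null `κ_j`'s are i.i.d. uniform on
`{0,…,M}`, `v ≥ 1` satisfies `1 - (M/(M+1))^v ≤ α`, and the rejection set `R` contains only
indices `j` with `κ_j = 0` which are preceded (in the fixed ordering) by strictly fewer than `v`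
null indices with nonzero `κ`, then `P(|R ∩ H₀| ≥ 1) ≤ α`. -/
theorem knockoff_filter_fwer_control {Ω : Type*} [MeasurableSpace Ω] (μ : Measure Ω)
    [IsProbabilityMeasure μ] (p M v : ℕ) (hM : 1 ≤ M) (hv : 1 ≤ v)
    (α : ℝ≥0∞) (hα : 1 - ((M : ℝ≥0∞) / ((M : ℝ≥0∞) + 1)) ^ v ≤ α)
    (κ : Fin p → Ω → Fin (M + 1)) (hκmeas : ∀ j, Measurable (κ j))
    (H0 : Finset (Fin p))
    -- the null `κ_j`'s are independent ...
    (hIndep : iIndepFun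
      (fun j : {j : Fin p // j ∈ H0} => κ j) μ)
    -- ... and uniform on `{0,…,M}`, independent of the non-null `κ_j`'s
    (hUnif : ∀ j ∈ H0, ∀ m : Fin (M + 1), μ {ω | κ j ω = m} = 1 / ((M : ℝ≥0∞) + 1))
    (hIndepRest : IndepFun (fun ω => fun j : {j : Fin p // j ∈ H0} => κ j ω)
      (fun ω => fun j : {j : Fin p // j ∉ H0} => κ j ω) μ)
    (R : Ω → Finset (Fin p))
    -- `R` only contains indices with `κ_j = 0`, and any null index in `R` is preceded by
    -- strictly fewer than `v` null indices with nonzero `κ`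
    (hR : ∀ ω, ∀ j ∈ R ω, j ∈ H0 →
      κ j ω = 0 ∧ ((H0.filter fun i => i < j ∧ κ i ω ≠ 0).card < v)) :
    μ {ω | 1 ≤ (R ω ∩ H0).card} ≤ α :=
  knockoff_filter_fwer_control_general μ p M v α hα κ hκmeas H0 hIndep hUnif R hR
end

section
/- The p×p matrix C - ((M-1)/M)·D = ((M+1)/M)·D - D·Σ⁻¹·D is positive semidefinite, where D is a nonnegative diagonal matrix satisfying ((M+1)/M)·Σ - D ⪰ 0, Σ is positive definite, and C = 2D - D·Σ⁻¹·D. -/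
open Matrix

/-! With `w := S⁻¹ D x`, the form `xᵀ (c D - D S⁻¹ D) x` equals `c xᵀ D x - xᵀ D w`.
Expanding `(w - c x)ᵀ D (w - c x) ≥ 0` and bounding `wᵀ D w ≤ c wᵀ S w = c xᵀ D w` by the
constraint `D ⪯ c S` shows that `c` times this form is nonnegative. -/

namespace Matrix

variable {n : Type*} [Fintype n] [DecidableEq n]

theorem PosSemidef.smul_sub_mul_inv_mul {c : ℝ} (hc : 0 < c) {S D : Matrix n n ℝ}
    (hS : S.PosDef) (hD : D.PosSemidef) (h : (c • S - D).PosSemidef) :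
    (c • D - D * S⁻¹ * D).PosSemidef := by
  have hDS : (D * S⁻¹ * D).PosSemidef := by
    simpa only [hD.isHermitian.eq] using hS.inv.posSemidef.conjTranspose_mul_mul_same D
  refine .of_dotProduct_mulVec_nonneg ((hD.isHermitian.smul (.all c)).sub hDS.isHermitian)
    fun x ↦ ?_
  set w := S⁻¹ *ᵥ (D *ᵥ x)
  have hSw : S *ᵥ w = D *ᵥ x := by
    rw [mulVec_mulVec, mul_nonsing_inv S ((isUnit_iff_isUnit_det S).mp hS.isUnit), one_mulVec]
  have hsymm : w ⬝ᵥ (D *ᵥ x) = x ⬝ᵥ (D *ᵥ w) := by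
    rw [dotProduct_mulVec, ← mulVec_transpose, ← conjTranspose_eq_transpose_of_trivial,
      hD.isHermitian.eq, dotProduct_comm]
  have hsq := hD.dotProduct_mulVec_nonneg (w - c • x)
  have hcon := h.dotProduct_mulVec_nonneg w
  simp only [star_trivial, sub_mulVec, smul_mulVec, mulVec_sub, mulVec_smul, dotProduct_sub,
    sub_dotProduct, dotProduct_smul, smul_dotProduct, smul_eq_mul, hSw, hsymm,
    ← mulVec_mulVec] at hsq hcon ⊢
  nlinarith

end Matrix

/-- If `Σ` is positive definite, `D = diag(s)` with `s ≥ 0` satisfies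
`((M+1)/M)·Σ - D ⪰ 0`, then `C - ((M-1)/M)·D = ((M+1)/M)·D - D·Σ⁻¹·D` is positive
semidefinite, where `C = 2D - D·Σ⁻¹·D`. -/
theorem ghostknockoff_block_psd {p : ℕ} (M : ℕ) (hM : 1 ≤ M)
    (S : Matrix (Fin p) (Fin p) ℝ) (hS : S.PosDef)
    (s : Fin p → ℝ) (hs : ∀ j, 0 ≤ s j)
    (D : Matrix (Fin p) (Fin p) ℝ) (hD : D = Matrix.diagonal s)
    (hconstraint : ((((M : ℝ) + 1) / (M : ℝ)) • S - D).PosSemidef)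
    (C : Matrix (Fin p) (Fin p) ℝ) (hC : C = 2 • D - D * S⁻¹ * D) :
    (C - (((M : ℝ) - 1) / (M : ℝ)) • D).PosSemidef ∧
      C - (((M : ℝ) - 1) / (M : ℝ)) • D = (((M : ℝ) + 1) / (M : ℝ)) • D - D * S⁻¹ * D := by
  have hMpos : (0 : ℝ) < M := by exact_mod_cast hM
  have hcoef : ((M : ℝ) + 1) / M = 2 - ((M : ℝ) - 1) / M := by
    field_simp
    ring
  have hsplit : C - (((M : ℝ) - 1) / M) • D = (((M : ℝ) + 1) / M) • D - D * S⁻¹ * D := by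
    rw [hC, hcoef]
    module
  have hDpsd : D.PosSemidef := hD ▸ PosSemidef.diagonal hs
  exact ⟨hsplit ▸ hDpsd.smul_sub_mul_inv_mul (by positivity) hS hconstraint, hsplit⟩
end

section
/- Suppose the random vector Z^{0:M} = (Z̃⁰, Z̃¹, ..., Z̃ᴹ) of ℝᵖ-valued vectors satisfies the extended exchangeability property: for any family of permutations σ = (σ_1,...,σ_p) of {0,...,M} with σ_j the identity for j ∉ H_0, the swapped vector (Z̃_j^{σ_j(m)})_{j,m} has the same distribution as Z^{0:M}. Define κ_j = argmax_{0≤m≤M} (Z̃_j^m)² and τ_j = (Z̃_j^{κ_j})² - median_{m≠κ_j}(Z̃_j^m)². Then conditional on (κ_j)_{j∉H_0} and (τ_j)_{j=1}^p, the variables (κ_j)_{j∈H_0} are independent and uniformly distributed on {0,1,...,M}. -/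
/-!
Let `z` be the `(M + 1) × p` array of `Z`-scores and `k` a labelling of its columns by copy
indices. Off a null set, the event that `κ = k` and the statistics lie in `A` is the event that
every column `j` of `z` has its strict argmax at `k j` and the statistics computed from `z`
and `k` lie in `A`. Permuting the copies of column `j` by `σ j` moves its strict
argmax by `(σ j)⁻¹` and only permutes the list whose median enters `τ_j`, so it maps these events
onto each other; by exchangeability all labellings that agree off `H0` have the same
probability, and summing over the `(M + 1) ^ |H0|` null labellings gives the factor.
-/

open MeasureTheory ENNReal

/-- The median of a list of reals (a fixed conventional choice: the middle element of the
sorted list). -/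
noncomputable def medianOf (l : List ℝ) : ℝ := (l.mergeSort (· ≤ ·)).getD (l.length / 2) 0

theorem List.Pairwise.getElem_le_iff_lt_countP {α : Type*} [LinearOrder α] {l : List α}
    (hl : l.Pairwise (· ≤ ·)) {k : ℕ} (hk : k < l.length) (t : α) :
    l[k] ≤ t ↔ k < l.countP (· ≤ t) := by
  constructor
  · intro h
    have htake : ∀ a ∈ l.take (k + 1), a ≤ t := by
      intro a ha
      obtain ⟨i, hi, rfl⟩ := List.getElem_of_mem ha
      rw [List.length_take] at hi
      rw [List.getElem_take]
      exact (hl.sortedLE.getElem_le_getElem_of_le (by omega)).trans h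
    calc k < (l.take (k + 1)).countP (· ≤ t) := by
          rw [List.countP_eq_length.2 (by simpa using htake), List.length_take]; omega
      _ ≤ l.countP (· ≤ t) := (List.take_sublist _ _).countP_le
  · contrapose!
    intro h
    have hdrop : (l.drop k).countP (· ≤ t) = 0 := List.countP_eq_zero.2 fun a ha => by
      obtain ⟨i, hi, rfl⟩ := List.getElem_of_mem ha
      rw [List.getElem_drop, decide_eq_true_iff, not_le]
      exact h.trans_le (hl.sortedLE.getElem_le_getElem_of_le (by omega))
    calc l.countP (· ≤ t) = (l.take k).countP (· ≤ t) + (l.drop k).countP (· ≤ t) := by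
          rw [← List.countP_append, List.take_append_drop]
      _ ≤ k := by
          rw [hdrop, add_zero]
          exact List.countP_le_length.trans (List.length_take_le _ _)

theorem medianOf_le_iff {l : List ℝ} (hl : l ≠ []) (t : ℝ) :
    medianOf l ≤ t ↔ l.length / 2 < l.countP (· ≤ t) := by
  have hperm := l.mergeSort_perm (· ≤ ·)
  have hk : l.length / 2 < (l.mergeSort (· ≤ ·)).length := by
    rw [hperm.length_eq]; exact Nat.div_lt_self (List.length_pos_iff.2 hl) one_lt_two
  rw [medianOf, List.getD_eq_getElem _ _ hk,
    (List.pairwise_mergeSort' _ l).getElem_le_iff_lt_countP hk, hperm.countP_eq]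

theorem medianOf_perm {l₁ l₂ : List ℝ} (h : l₁.Perm l₂) : medianOf l₁ = medianOf l₂ := by
  have : l₁.mergeSort (· ≤ ·) = l₂.mergeSort (· ≤ ·) :=
    (((l₁.mergeSort_perm _).trans h).trans (l₂.mergeSort_perm _).symm).eq_of_pairwise'
      (List.pairwise_mergeSort' _ _) (List.pairwise_mergeSort' _ _)
  rw [medianOf, medianOf, this, h.length_eq]

section Measurability

variable {α : Type*} [MeasurableSpace α] {fs : List (α → ℝ)}

theorem measurable_countP_map_le (hfs : ∀ f ∈ fs, Measurable f) (t : ℝ) :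
    Measurable fun a => (fs.map (· a)).countP (· ≤ t) := by
  induction fs with
  | nil => exact measurable_const
  | cons f fs ih =>
    simp only [List.map_cons, List.countP_cons, decide_eq_true_eq]
    exact (ih fun g hg => hfs g (.tail _ hg)).add <|
      Measurable.ite (measurableSet_le (hfs f (.head _)) measurable_const)
        measurable_const measurable_const

theorem measurable_medianOf_map (hfs : ∀ f ∈ fs, Measurable f) :
    Measurable fun a => medianOf (fs.map (· a)) := by
  rcases eq_or_ne fs [] with rfl | hne
  · simp only [List.map_nil]
    exact measurable_const
  refine measurable_of_Iic fun t => ?_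
  have : (fun a => medianOf (fs.map (· a))) ⁻¹' Set.Iic t =
      (fun a => (fs.map (· a)).countP (· ≤ t)) ⁻¹' Set.Ioi (fs.length / 2) := by
    ext a
    simp [medianOf_le_iff (List.map_eq_nil_iff.not.2 hne)]
  rw [this]
  exact measurable_countP_map_le hfs t measurableSet_Ioi

end Measurability

def IsStrictArgmax {ι α : Type*} [LT α] (f : ι → α) (i : ι) : Prop := ∀ i' ≠ i, f i' < f i

section StrictArgmax

variable {ι ι' α : Type*}

theorem IsStrictArgmax.unique [Preorder α] {f : ι → α} {i i' : ι} (h : IsStrictArgmax f i)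
    (h' : IsStrictArgmax f i') : i = i' :=
  by_contra fun hne => lt_asymm (h i' (Ne.symm hne)) (h' i hne)

theorem isStrictArgmax_comp_equiv [LT α] (f : ι → α) (e : ι' ≃ ι) (i : ι') :
    IsStrictArgmax (f ∘ e) i ↔ IsStrictArgmax f (e i) := by
  unfold IsStrictArgmax
  exact e.forall_congr fun _ => by
    rw [e.injective.ne_iff, Function.comp_apply, Function.comp_apply]

theorem measurableSet_isStrictArgmax [MeasurableSpace α] [Countable ι] {f : α → ι → ℝ}
    (hf : ∀ i, Measurable fun a => f a i) (i : ι) :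
    MeasurableSet {a | IsStrictArgmax (f a) i} := by
  simp only [IsStrictArgmax, Set.ofPred_forall]
  exact MeasurableSet.iInter fun i' => MeasurableSet.iInter fun _ =>
    measurableSet_lt (hf i') (hf i)

end StrictArgmax

noncomputable def gapStat {n : ℕ} (x : Fin n → ℝ) (m : Fin n) : ℝ :=
  x m ^ 2 - medianOf (((List.finRange n).filter fun m' => m' ≠ m).map fun m' => x m' ^ 2)

section GapStat

variable {n : ℕ}

theorem gapStat_comp_perm (x : Fin n → ℝ) (σ : Equiv.Perm (Fin n)) (m : Fin n) :
    gapStat (x ∘ σ) m = gapStat x (σ m) := by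
  have hperm : (((List.finRange n).filter fun m' => m' ≠ m).map σ).Perm
      ((List.finRange n).filter fun m' => m' ≠ σ m) := by
    have := σ.map_finRange_perm.filter fun m' => m' ≠ σ m
    rw [List.filter_map] at this
    convert this using 4 with m'
    simp
  rw [gapStat, gapStat, ← medianOf_perm (hperm.map fun m' => x m' ^ 2), List.map_map]
  rfl

theorem measurable_gapStat (m : Fin n) : Measurable fun x : Fin n → ℝ => gapStat x m := by
  refine ((measurable_pi_apply m).pow_const 2).sub ?_
  have := measurable_medianOf_map
    (fs := ((List.finRange n).filter fun m' => m' ≠ m).map fun m' (x : Fin n → ℝ) => x m' ^ 2)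
    (by simp only [List.mem_map]; rintro _ ⟨m', -, rfl⟩; exact (measurable_pi_apply m').pow_const 2)
  simpa only [List.map_map, Function.comp_def] using this

end GapStat

section Copies

variable {n : ℕ} {J : Type*}

def swapCopies (σ : J → Equiv.Perm (Fin n)) (z : Fin n × J → ℝ) : Fin n × J → ℝ :=
  fun q => z (σ q.2 q.1, q.2)

theorem measurable_swapCopies (σ : J → Equiv.Perm (Fin n)) : Measurable (swapCopies σ) :=
  measurable_pi_lambda _ fun _ => measurable_pi_apply _

def argmaxEvent (H0 : Finset J) (A : Set (({j // j ∉ H0} → Fin n) × (J → ℝ)))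
    (k : J → Fin n) : Set (Fin n × J → ℝ) :=
  {z | (∀ j, IsStrictArgmax (fun m => z (m, j) ^ 2) (k j)) ∧
    ((fun j : {j // j ∉ H0} => k j), fun j => gapStat (fun m => z (m, j)) (k j)) ∈ A}

variable {H0 : Finset J} {A : Set (({j // j ∉ H0} → Fin n) × (J → ℝ))}

theorem measurableSet_argmaxEvent [Countable J] (hA : MeasurableSet A) (k : J → Fin n) :
    MeasurableSet (argmaxEvent H0 A k) := by
  have hcoord : ∀ j m, Measurable fun z : Fin n × J → ℝ => z (m, j) := fun j m =>
    measurable_pi_apply _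
  rw [argmaxEvent, Set.ofPred_and, Set.ofPred_forall]
  refine (MeasurableSet.iInter fun j => ?_).inter (hA.preimage ?_)
  · exact measurableSet_isStrictArgmax (fun m => (hcoord j m).pow_const 2) (k j)
  · exact measurable_const.prodMk <| measurable_pi_lambda _ fun j =>
      (measurable_gapStat (k j)).comp (measurable_pi_lambda _ (hcoord j))

theorem pairwise_disjoint_argmaxEvent : Pairwise (Function.onFun Disjoint (argmaxEvent H0 A)) :=
  fun _ _ hne => Set.disjoint_left.2 fun _ hz hz' =>
    hne (funext fun j => (hz.1 j).unique (hz'.1 j))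

theorem mem_argmaxEvent_iff {z : Fin n × J → ℝ} {k₀ : J → Fin n}
    (hz : ∀ j, IsStrictArgmax (fun m => z (m, j) ^ 2) (k₀ j)) {k : J → Fin n} :
    z ∈ argmaxEvent H0 A k ↔ k = k₀ ∧
      ((fun j : {j // j ∉ H0} => k₀ j), fun j => gapStat (fun m => z (m, j)) (k₀ j)) ∈ A := by
  constructor
  · rintro ⟨hk, hA⟩
    obtain rfl : k = k₀ := funext fun j => (hk j).unique (hz j)
    exact ⟨rfl, hA⟩
  · rintro ⟨rfl, hA⟩
    exact ⟨hz, hA⟩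

theorem mem_iUnion_argmaxEvent_iff {z : Fin n × J → ℝ} {k₀ : J → Fin n}
    (hz : ∀ j, IsStrictArgmax (fun m => z (m, j) ^ 2) (k₀ j)) :
    z ∈ ⋃ k, argmaxEvent H0 A k ↔
      ((fun j : {j // j ∉ H0} => k₀ j), fun j => gapStat (fun m => z (m, j)) (k₀ j)) ∈ A := by
  simp only [Set.mem_iUnion, mem_argmaxEvent_iff hz, exists_eq_left]

theorem mem_iUnion_argmaxEvent_fiber_iff [DecidableEq J] {z : Fin n × J → ℝ} {k₀ : J → Fin n}
    (hz : ∀ j, IsStrictArgmax (fun m => z (m, j) ^ 2) (k₀ j)) (v : {j // j ∈ H0} → Fin n) :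
    z ∈ ⋃ u, argmaxEvent H0 A ((Equiv.piEquivPiSubtypeProd (· ∈ H0) fun _ => Fin n).symm (v, u))
      ↔ (∀ j : {j // j ∈ H0}, k₀ j = v j) ∧
        ((fun j : {j // j ∉ H0} => k₀ j), fun j => gapStat (fun m => z (m, j)) (k₀ j)) ∈ A := by
  simp only [Set.mem_iUnion, mem_argmaxEvent_iff hz, Equiv.symm_apply_eq]
  constructor
  · rintro ⟨u, hvu, hA⟩
    exact ⟨fun j => (congrFun (congrArg Prod.fst hvu) j).symm, hA⟩
  · rintro ⟨hv, hA⟩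
    exact ⟨fun j => k₀ j, Prod.ext (funext hv).symm rfl, hA⟩

theorem preimage_swapCopies_argmaxEvent {σ : J → Equiv.Perm (Fin n)} (hσ : ∀ j ∉ H0, σ j = 1)
    (k : J → Fin n) :
    swapCopies σ ⁻¹' argmaxEvent H0 A k = argmaxEvent H0 A fun j => σ j (k j) := by
  have hk : (fun j : {j // j ∉ H0} => σ j (k j)) = fun j : {j // j ∉ H0} => k j :=
    funext fun j => by rw [hσ j j.2, Equiv.Perm.one_apply]
  ext z
  have hgap : (fun j => gapStat (fun m => swapCopies σ z (m, j)) (k j)) =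
      fun j => gapStat (fun m => z (m, j)) (σ j (k j)) :=
    funext fun j => gapStat_comp_perm (fun m => z (m, j)) (σ j) (k j)
  simp only [Set.mem_preimage, argmaxEvent, Set.mem_ofPred_eq, hk, hgap]
  exact and_congr_left' <| forall_congr' fun j =>
    isStrictArgmax_comp_equiv (fun m => z (m, j) ^ 2) (σ j) (k j)

theorem measure_argmaxEvent_eq [Countable J] {ν : Measure (Fin n × J → ℝ)}
    (hν : ∀ σ : J → Equiv.Perm (Fin n), (∀ j ∉ H0, σ j = 1) → ν.map (swapCopies σ) = ν)
    (hA : MeasurableSet A) {k k' : J → Fin n} (hkk' : ∀ j ∉ H0, k j = k' j) :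
    ν (argmaxEvent H0 A k) = ν (argmaxEvent H0 A k') := by
  set σ : J → Equiv.Perm (Fin n) := fun j => Equiv.swap (k' j) (k j)
  have hσ : ∀ j ∉ H0, σ j = 1 := fun j hj => by
    simp only [σ, hkk' j hj, Equiv.swap_self]
    rfl
  have hσk' : (fun j => σ j (k' j)) = k := funext fun j => Equiv.swap_apply_left _ _
  calc ν (argmaxEvent H0 A k) = ν (swapCopies σ ⁻¹' argmaxEvent H0 A k') := by
        rw [preimage_swapCopies_argmaxEvent hσ, hσk']
    _ = ν.map (swapCopies σ) (argmaxEvent H0 A k') :=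
        (Measure.map_apply (measurable_swapCopies σ) (measurableSet_argmaxEvent hA k')).symm
    _ = ν (argmaxEvent H0 A k') := by rw [hν σ hσ]

theorem measure_preimage_iUnion_argmaxEvent [Countable J] {Ω : Type*} [MeasurableSpace Ω]
    {μ : Measure Ω} {X : Ω → Fin n × J → ℝ} (hX : Measurable X) (hA : MeasurableSet A)
    {ι : Type*} [Fintype ι] {g : ι → J → Fin n} (hg : Function.Injective g) :
    μ (X ⁻¹' ⋃ i, argmaxEvent H0 A (g i)) = ∑ i, μ.map X (argmaxEvent H0 A (g i)) := by
  have hmeas : ∀ i, MeasurableSet (argmaxEvent H0 A (g i)) := fun i =>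
    measurableSet_argmaxEvent hA (g i)
  rw [← Measure.map_apply hX (MeasurableSet.iUnion hmeas),
    measure_iUnion (pairwise_disjoint_argmaxEvent.comp_of_injective hg) hmeas, tsum_fintype]

end Copies

theorem Fintype.sum_pi_eq_card_nsmul_of_eq_off {J β γ : Type*} [Fintype J] [DecidableEq J]
    [Fintype β] [AddCommMonoid γ] (P : J → Prop) [DecidablePred P] {f : (J → β) → γ}
    (hf : ∀ k k' : J → β, (∀ j, ¬P j → k j = k' j) → f k = f k') (v : {j // P j} → β) :
    ∑ k, f k = Fintype.card ({j // P j} → β) •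
      ∑ u, f ((Equiv.piEquivPiSubtypeProd P fun _ => β).symm (v, u)) := by
  rw [← (Equiv.piEquivPiSubtypeProd P fun _ => β).symm.sum_comp, Fintype.sum_prod_type,
    ← Finset.card_univ, ← Finset.sum_const]
  refine Finset.sum_congr rfl fun w _ => Finset.sum_congr rfl fun u _ => hf _ _ fun j hj => ?_
  simp [Equiv.piEquivPiSubtypeProd_symm_apply, hj]

theorem knockoff_stats_null_kappa_iid_uniform_general {Ω : Type*} [MeasurableSpace Ω] (μ : Measure Ω)
    (p M : ℕ)
    (H0 : Finset (Fin p))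
    (Z : Fin (M + 1) → Fin p → Ω → ℝ) (hZmeas : ∀ m j, Measurable (Z m j))
    -- extended exchangeability: swapping copy indices at null coordinates leaves the law
    -- of all the `Z`-scores unchanged
    (hExch : ∀ σ : Fin p → Equiv.Perm (Fin (M + 1)), (∀ j ∉ H0, σ j = 1) →
      Measure.map (fun ω => fun q : Fin (M + 1) × Fin p => Z (σ q.2 q.1) q.2 ω) μ =
        Measure.map (fun ω => fun q : Fin (M + 1) × Fin p => Z q.1 q.2 ω) μ)
    (κ : Fin p → Ω → Fin (M + 1)) (τ : Fin p → Ω → ℝ)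
    -- `κ_j` is the (a.s. unique) argmax of the squared `Z`-scores
    (hκ : ∀ᵐ ω ∂μ, ∀ j : Fin p, ∀ m : Fin (M + 1), m ≠ κ j ω →
      (Z m j ω) ^ 2 < (Z (κ j ω) j ω) ^ 2)
    -- `τ_j` is the squared maximum minus the median of the other squared `Z`-scores
    (hτ : ∀ j ω, τ j ω = (Z (κ j ω) j ω) ^ 2 -
      medianOf (((List.finRange (M + 1)).filter fun m => m ≠ κ j ω).map
        fun m => (Z m j ω) ^ 2)) :
    ∀ v : {j : Fin p // j ∈ H0} → Fin (M + 1),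
      ∀ A : Set (({j : Fin p // j ∉ H0} → Fin (M + 1)) × (Fin p → ℝ)), MeasurableSet A →
        μ {ω | (∀ j : {j : Fin p // j ∈ H0}, κ j ω = v j) ∧
            ((fun j : {j : Fin p // j ∉ H0} => κ j ω), fun j : Fin p => τ j ω) ∈ A} =
          (((M : ℝ≥0∞) + 1)⁻¹) ^ H0.card *
            μ {ω | ((fun j : {j : Fin p // j ∉ H0} => κ j ω), fun j : Fin p => τ j ω) ∈ A} := by
  intro v A hA
  set X : Ω → Fin (M + 1) × Fin p → ℝ := fun ω q => Z q.1 q.2 ω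
  have hX : Measurable X := measurable_pi_lambda _ fun q => hZmeas q.1 q.2
  have hν : ∀ σ : Fin p → Equiv.Perm (Fin (M + 1)), (∀ j ∉ H0, σ j = 1) →
      (μ.map X).map (swapCopies σ) = μ.map X := fun σ hσ => by
    rw [Measure.map_map (measurable_swapCopies σ) hX]
    exact hExch σ hσ
  have hτX : ∀ ω, (fun j => τ j ω) = fun j => gapStat (fun m => X ω (m, j)) (κ j ω) :=
    fun ω => funext fun j => hτ j ω
  set e := Equiv.piEquivPiSubtypeProd (· ∈ H0) fun _ => Fin (M + 1)
  have hfiber : μ {ω | (∀ j : {j : Fin p // j ∈ H0}, κ j ω = v j) ∧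
      ((fun j : {j : Fin p // j ∉ H0} => κ j ω), fun j : Fin p => τ j ω) ∈ A} =
      ∑ u, μ.map X (argmaxEvent H0 A (e.symm (v, u))) := by
    refine (measure_congr (Filter.eventuallyEq_set.2 ?_)).trans
      (measure_preimage_iUnion_argmaxEvent hX hA
        (e.symm.injective.comp (Prod.mk_right_injective v)))
    filter_upwards [hκ] with ω hω
    rw [Set.mem_preimage, mem_iUnion_argmaxEvent_fiber_iff hω, ← hτX]
  have hall : μ {ω | ((fun j : {j : Fin p // j ∉ H0} => κ j ω), fun j : Fin p => τ j ω) ∈ A} =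
      ∑ k, μ.map X (argmaxEvent H0 A k) := by
    refine (measure_congr (Filter.eventuallyEq_set.2 ?_)).trans
      (measure_preimage_iUnion_argmaxEvent (g := fun k => k) hX hA Function.injective_id)
    filter_upwards [hκ] with ω hω
    rw [Set.mem_preimage, mem_iUnion_argmaxEvent_iff hω, ← hτX]
  rw [hfiber, hall, Fintype.sum_pi_eq_card_nsmul_of_eq_off (· ∈ H0)
      (fun k k' hkk' => measure_argmaxEvent_eq hν hA hkk') v, nsmul_eq_mul, ← mul_assoc,
    Fintype.card_eq_nat_card, Nat.card_fun, Nat.card_eq_finsetCard, Nat.card_fin, Nat.cast_pow,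
    Nat.cast_succ, ← mul_pow, ENNReal.inv_mul_cancel (by simp) (by simp), one_pow, one_mul]

/-- Lemma 1: if the `Z`-scores `Z⁰, …, Zᴹ` satisfy the extended exchangeability property with
respect to the null set `H₀`, and `κ_j`, `τ_j` are the knockoff statistics (argmax and gap to
the median, with the argmax a.s. unique), then conditional on the non-null `κ`'s and all
`τ`'s, the null `κ_j`'s are i.i.d. uniform on `{0,…,M}`: for every choice of values and every
event depending only on the non-null `κ`'s and `τ`, the joint probability factorizes with
factor `(1/(M+1))^{|H₀|}`. -/
theorem knockoff_stats_null_kappa_iid_uniform {Ω : Type*} [MeasurableSpace Ω] (μ : Measure Ω)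
    [IsProbabilityMeasure μ] (p M : ℕ) (hM : 1 ≤ M)
    (H0 : Finset (Fin p))
    (Z : Fin (M + 1) → Fin p → Ω → ℝ) (hZmeas : ∀ m j, Measurable (Z m j))
    -- extended exchangeability: swapping copy indices at null coordinates leaves the law
    -- of all the `Z`-scores unchanged
    (hExch : ∀ σ : Fin p → Equiv.Perm (Fin (M + 1)), (∀ j ∉ H0, σ j = 1) →
      Measure.map (fun ω => fun q : Fin (M + 1) × Fin p => Z (σ q.2 q.1) q.2 ω) μ =
        Measure.map (fun ω => fun q : Fin (M + 1) × Fin p => Z q.1 q.2 ω) μ)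
    (κ : Fin p → Ω → Fin (M + 1)) (τ : Fin p → Ω → ℝ)
    (hκmeas : ∀ j, Measurable (κ j)) (hτmeas : ∀ j, Measurable (τ j))
    -- `κ_j` is the (a.s. unique) argmax of the squared `Z`-scores
    (hκ : ∀ᵐ ω ∂μ, ∀ j : Fin p, ∀ m : Fin (M + 1), m ≠ κ j ω →
      (Z m j ω) ^ 2 < (Z (κ j ω) j ω) ^ 2)
    -- `τ_j` is the squared maximum minus the median of the other squared `Z`-scores
    (hτ : ∀ j ω, τ j ω = (Z (κ j ω) j ω) ^ 2 -
      medianOf (((List.finRange (M + 1)).filter fun m => m ≠ κ j ω).map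
        fun m => (Z m j ω) ^ 2)) :
    ∀ v : {j : Fin p // j ∈ H0} → Fin (M + 1),
      ∀ A : Set (({j : Fin p // j ∉ H0} → Fin (M + 1)) × (Fin p → ℝ)), MeasurableSet A →
        μ {ω | (∀ j : {j : Fin p // j ∈ H0}, κ j ω = v j) ∧
            ((fun j : {j : Fin p // j ∉ H0} => κ j ω), fun j : Fin p => τ j ω) ∈ A} =
          (((M : ℝ≥0∞) + 1)⁻¹) ^ H0.card *
            μ {ω | ((fun j : {j : Fin p // j ∉ H0} => κ j ω), fun j : Fin p => τ j ω) ∈ A} :=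
  knockoff_stats_null_kappa_iid_uniform_general μ p M H0 Z hZmeas hExch κ τ hκ hτ
end

section
/- Let Σ be positive definite, D nonnegative diagonal with ((M+1)/M)Σ - D ⪰ 0, and define P as the M-fold vertical stack of I - DΣ⁻¹ and V the block matrix with diagonal blocks C = 2D - DΣ⁻¹D and off-diagonal blocks C - D. If Z ~ N(0, Σ) and E ~ N(0, V) is independent of Z, then the joint vector (Z, PZ + E) is Gaussian with covariance matrix whose (0,0)-block is Σ, whose (0,m)-blocks are Σ - D for m ≥ 1, whose (m,m)-blocks are Σ for m ≥ 1, and whose (m,m')-blocks are Σ - D for 1 ≤ m ≠ m' ≤ M. -/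
open MeasureTheory ProbabilityTheory Matrix

/-- A family `X : ι → Ω → ℝ` is a centered Gaussian vector with covariance matrix `S` if every
linear combination `∑ i, a i * X i` has law `N(0, aᵀSa)`. -/
def IsCenteredGaussianWithCov {Ω ι : Type*} [MeasurableSpace Ω] [Fintype ι]
    (μ : Measure Ω) (X : ι → Ω → ℝ) (S : Matrix ι ι ℝ) : Prop :=
  ∀ a : ι → ℝ, Measure.map (fun ω => ∑ i, a i * X i ω) μ =
    gaussianReal 0 (Real.toNNReal (∑ i, ∑ j, a i * S i j * a j))

/-!
With `P = I - DΣ⁻¹`, the joint vector is `L (Z, E)` for the loading matrix `L` whose block row `0`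
is `(I, 0)` and whose block row `m + 1` is `(P, eₘ)`. Since `(Z, E)` is Gaussian with covariance
`diag(Σ, V)`, the joint vector is Gaussian with covariance `L diag(Σ, V) Lᵀ`, whose blocks are `Σ`,
`ΣPᵀ = PΣ = Σ - D` and `PΣPᵀ + V_{mm'}` with `PΣPᵀ = Σ - 2D + DΣ⁻¹D`.

Because the variance in `IsCenteredGaussianWithCov` is truncated by `Real.toNNReal`, variances of
independent summands add only when they are nonnegative, so the real input is `V ⪰ 0`. Writing
`t = ∑ₘ cₘ`, one has `cᵀVc = tᵀ(D - DΣ⁻¹D)t + ∑ₘ cₘᵀDcₘ`; the constraint `((M+1)/M)Σ ⪰ D` gives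
`DΣ⁻¹D ⪯ ((M+1)/M)D`, and Cauchy–Schwarz gives `tᵀDt ≤ M ∑ₘ cₘᵀDcₘ`.
-/

theorem isCenteredGaussianWithCov_iff {Ω ι : Type*} [MeasurableSpace Ω] [Fintype ι]
    {μ : Measure Ω} {X : ι → Ω → ℝ} {S : Matrix ι ι ℝ} :
    IsCenteredGaussianWithCov μ X S ↔ ∀ a : ι → ℝ,
      μ.map (fun ω => a ⬝ᵥ fun i => X i ω) = gaussianReal 0 (a ⬝ᵥ S *ᵥ a).toNNReal := by
  have hquad (a : ι → ℝ) : ∑ i, ∑ j, a i * S i j * a j = a ⬝ᵥ S *ᵥ a := by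
    simp only [dotProduct, mulVec, Finset.mul_sum, mul_assoc]
  simp only [IsCenteredGaussianWithCov, hquad]
  rfl

namespace IsCenteredGaussianWithCov

variable {Ω ι κ : Type*} [MeasurableSpace Ω] [Fintype ι] [Fintype κ] {μ : Measure Ω}
  {X : ι → Ω → ℝ} {S : Matrix ι ι ℝ}

theorem mulVec (hX : IsCenteredGaussianWithCov μ X S) (A : Matrix κ ι ℝ) :
    IsCenteredGaussianWithCov μ (fun k ω => (A *ᵥ fun i => X i ω) k) (A * S * Aᵀ) := by
  rw [isCenteredGaussianWithCov_iff] at hX ⊢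
  intro a
  simp only [dotProduct_mulVec a A, hX]
  rw [← mulVec_mulVec, ← mulVec_mulVec, mulVec_transpose, dotProduct_mulVec a A]

theorem sumElim {ι' : Type*} [Fintype ι'] {Y : ι' → Ω → ℝ} {V : Matrix ι' ι' ℝ}
    (hX : IsCenteredGaussianWithCov μ X S) (hY : IsCenteredGaussianWithCov μ Y V)
    (hS : ∀ a, 0 ≤ a ⬝ᵥ S *ᵥ a) (hV : ∀ b, 0 ≤ b ⬝ᵥ V *ᵥ b)
    (hXY : IndepFun (fun ω i => X i ω) (fun ω j => Y j ω) μ) :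
    IsCenteredGaussianWithCov μ (Sum.elim X Y) (fromBlocks S 0 0 V) := by
  rw [isCenteredGaussianWithCov_iff] at hX hY ⊢
  intro c
  obtain ⟨a, b, rfl⟩ : ∃ a b, c = Sum.elim a b := ⟨_, _, (Sum.elim_comp_inl_inr c).symm⟩
  have hsplit : (fun ω => Sum.elim a b ⬝ᵥ fun r => Sum.elim X Y r ω)
      = (fun ω => a ⬝ᵥ fun i => X i ω) + fun ω => b ⬝ᵥ fun j => Y j ω := by
    ext ω
    simp only [dotProduct, Fintype.sum_sum_type, Sum.elim_inl, Sum.elim_inr, Pi.add_apply]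
  have hindep : IndepFun (fun ω => a ⬝ᵥ fun i => X i ω) (fun ω => b ⬝ᵥ fun j => Y j ω) μ :=
    hXY.comp (φ := fun x : ι → ℝ => a ⬝ᵥ x) (ψ := fun y : ι' → ℝ => b ⬝ᵥ y)
      (by fun_prop) (by fun_prop)
  rw [hsplit, gaussianReal_add_gaussianReal_of_indepFun hindep (hX a) (hY b), zero_add,
    ← Real.toNNReal_add (hS a) (hV b)]
  simp [fromBlocks_mulVec]

end IsCenteredGaussianWithCov

section Loewner

variable {n : Type*} [Fintype n] {S D : Matrix n n ℝ}

theorem Matrix.IsSymm.dotProduct_mulVec_comm (hD : D.IsSymm) (x y : n → ℝ) :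
    x ⬝ᵥ D *ᵥ y = y ⬝ᵥ D *ᵥ x := by
  rw [dotProduct_mulVec, ← mulVec_transpose, hD.eq, dotProduct_comm]

variable [DecidableEq n]

theorem one_sub_mul_inv_mul (hS : IsUnit S.det) : (1 - D * S⁻¹) * S = S - D := by
  rw [sub_mul, one_mul, mul_assoc, nonsing_inv_mul _ hS, mul_one]

theorem mul_transpose_one_sub_mul_inv (hS : IsUnit S.det) (hSs : S.IsSymm) (hDs : D.IsSymm) :
    S * (1 - D * S⁻¹)ᵀ = S - D := by
  rw [← hSs.eq, ← transpose_mul, hSs.eq, one_sub_mul_inv_mul hS, transpose_sub, hSs.eq, hDs.eq]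

theorem one_sub_mul_inv_mul_mul_transpose (hS : IsUnit S.det) (hSs : S.IsSymm) (hDs : D.IsSymm) :
    (1 - D * S⁻¹) * S * (1 - D * S⁻¹)ᵀ = S - 2 • D + D * S⁻¹ * D := by
  rw [mul_assoc, mul_transpose_one_sub_mul_inv hS hSs hDs, sub_mul, one_mul, mul_sub,
    mul_assoc D, nonsing_inv_mul _ hS, mul_one, two_nsmul]
  abel

theorem dotProduct_mul_inv_mul_mulVec_le (hS : S.PosDef) (hD : D.PosSemidef) {k : ℝ} (hk : 0 < k)
    (hSD : (k • S - D).PosSemidef) (x : n → ℝ) :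
    x ⬝ᵥ (D * S⁻¹ * D) *ᵥ x ≤ k * (x ⬝ᵥ D *ᵥ x) := by
  have hDs : D.IsSymm := isHermitian_iff_isSymm.mp hD.isHermitian
  -- With `z = S⁻¹Dx` both `xᵀDS⁻¹Dx` and `zᵀSz` equal `zᵀDx`; then AM-GM in the form
  -- `(z - kx)ᵀD(z - kx) ≥ 0` is played against `zᵀDz ≤ k zᵀSz`.
  set z := S⁻¹ *ᵥ D *ᵥ x
  have hSz : S *ᵥ z = D *ᵥ x := by
    rw [mulVec_mulVec, mul_nonsing_inv _ ((isUnit_iff_isUnit_det S).mp hS.isUnit), one_mulVec]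
  have hq : x ⬝ᵥ (D * S⁻¹ * D) *ᵥ x = z ⬝ᵥ S *ᵥ z := by
    rw [← mulVec_mulVec, ← mulVec_mulVec, hDs.dotProduct_mulVec_comm, hSz]
  have hzDx : z ⬝ᵥ D *ᵥ x = z ⬝ᵥ S *ᵥ z := by rw [hSz]
  have hcon := hSD.dotProduct_mulVec_nonneg z
  have hAMGM := hD.dotProduct_mulVec_nonneg (z - k • x)
  simp only [star_trivial, sub_mulVec, smul_mulVec, mulVec_sub, mulVec_smul, dotProduct_sub,
    sub_dotProduct, dotProduct_smul, smul_dotProduct, smul_eq_mul] at hcon hAMGM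
  rw [hDs.dotProduct_mulVec_comm x z, hzDx] at hAMGM
  rw [hq]
  have hkq : k * (z ⬝ᵥ S *ᵥ z) ≤ k * (k * (x ⬝ᵥ D *ᵥ x)) := by linarith
  exact le_of_mul_le_mul_left hkq hk

end Loewner

theorem sum_dotProduct_diagonal_mulVec_sum_le {ι κ : Type*} [Fintype ι] [Fintype κ]
    [DecidableEq κ] {s : κ → ℝ} (hs : 0 ≤ s) (c : ι → κ → ℝ) :
    (∑ m, c m) ⬝ᵥ diagonal s *ᵥ ∑ m, c m ≤ Fintype.card ι * ∑ m, c m ⬝ᵥ diagonal s *ᵥ c m := by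
  have hdiag (x : κ → ℝ) : x ⬝ᵥ diagonal s *ᵥ x = ∑ j, s j * x j ^ 2 := by
    simp only [dotProduct, mulVec_diagonal]
    exact Finset.sum_congr rfl fun j _ => by ring
  simp only [hdiag, Finset.sum_apply, Finset.mul_sum]
  rw [Finset.sum_comm]
  refine Finset.sum_le_sum fun j _ => ?_
  calc s j * (∑ m, c m j) ^ 2 ≤ s j * (Fintype.card ι * ∑ m, c m j ^ 2) :=
        mul_le_mul_of_nonneg_left sq_sum_le_card_mul_sum_sq (hs j)
    _ = _ := by
        rw [Finset.mul_sum, Finset.mul_sum]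
        exact Finset.sum_congr rfl fun m _ => by ring

section Blocks

variable {ι κ : Type*} [Fintype ι] [Fintype κ] [DecidableEq ι] {A B : Matrix κ κ ℝ}
  {V : Matrix (ι × κ) (ι × κ) ℝ}

theorem mulVec_of_blocks
    (hV : ∀ m m' i j, V (m, i) (m', j) = if m = m' then A i j else B i j) (c : ι × κ → ℝ)
    (m : ι) (i : κ) :
    (V *ᵥ c) (m, i) = (B *ᵥ ∑ m', Function.curry c m') i + ((A - B) *ᵥ Function.curry c m) i := by
  have hsplit (m' : ι) (j : κ) :
      V (m, i) (m', j) = B i j + if m = m' then (A - B) i j else 0 := by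
    rw [hV]; split_ifs <;> simp
  simp only [mulVec, dotProduct, Fintype.sum_prod_type, hsplit, add_mul, Finset.sum_add_distrib,
    ite_mul, zero_mul, Finset.sum_apply, Function.curry_apply, Finset.mul_sum]
  congr 1
  · exact Finset.sum_comm
  · simp [Finset.sum_ite_irrel]

theorem dotProduct_mulVec_of_blocks
    (hV : ∀ m m' i j, V (m, i) (m', j) = if m = m' then A i j else B i j) (c : ι × κ → ℝ) :
    c ⬝ᵥ V *ᵥ c = (∑ m, Function.curry c m) ⬝ᵥ B *ᵥ (∑ m, Function.curry c m)
      + ∑ m, Function.curry c m ⬝ᵥ (A - B) *ᵥ Function.curry c m := by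
  simp only [dotProduct, Fintype.sum_prod_type, mulVec_of_blocks hV, mul_add,
    Finset.sum_add_distrib, Finset.sum_apply, Function.curry_apply, Finset.sum_mul]
  congr 1
  exact Finset.sum_comm

end Blocks

theorem dotProduct_mulVec_nonneg_of_knockoff_blocks {ι κ : Type*} [Fintype ι] [Nonempty ι]
    [DecidableEq ι] [Fintype κ] [DecidableEq κ] {S C D : Matrix κ κ ℝ} (hS : S.PosDef)
    {s : κ → ℝ} (hs : 0 ≤ s) (hD : D = diagonal s)
    (hSD : (((Fintype.card ι + 1 : ℝ) / Fintype.card ι) • S - D).PosSemidef)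
    (hC : C = 2 • D - D * S⁻¹ * D) {V : Matrix (ι × κ) (ι × κ) ℝ}
    (hV : ∀ m m' i j, V (m, i) (m', j) = if m = m' then C i j else (C - D) i j)
    (c : ι × κ → ℝ) :
    0 ≤ c ⬝ᵥ V *ᵥ c := by
  set n : ℝ := (Fintype.card ι : ℝ)
  have hn : 0 < n := Nat.cast_pos.mpr Fintype.card_pos
  have hCD : C - D = D - D * S⁻¹ * D := by rw [hC, two_nsmul]; abel
  rw [dotProduct_mulVec_of_blocks hV, sub_sub_cancel, hCD, sub_mulVec, dotProduct_sub]
  set t := ∑ m, Function.curry c m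
  have hDSD := dotProduct_mul_inv_mul_mulVec_le hS (hD ▸ PosSemidef.diagonal hs)
    (by positivity) hSD t
  have hCS : t ⬝ᵥ D *ᵥ t ≤ n * ∑ m, Function.curry c m ⬝ᵥ D *ᵥ Function.curry c m :=
    hD ▸ sum_dotProduct_diagonal_mulVec_sum_le hs (Function.curry c)
  have hk : (n + 1) / n * (t ⬝ᵥ D *ᵥ t) = t ⬝ᵥ D *ᵥ t + (t ⬝ᵥ D *ᵥ t) / n := by
    field_simp
  have hdiv : (t ⬝ᵥ D *ᵥ t) / n ≤ ∑ m, Function.curry c m ⬝ᵥ D *ᵥ Function.curry c m := by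
    rw [div_le_iff₀ hn]; linarith
  linarith

section StackRows

variable {ι m n α : Type*}

def stackRows (F : ι → Matrix m n α) : Matrix (ι × m) n α :=
  of fun q => F q.1 q.2

theorem stackRows_mulVec_apply [Fintype n] [NonUnitalNonAssocSemiring α] (F : ι → Matrix m n α)
    (v : n → α) (k : ι) (i : m) : (stackRows F *ᵥ v) (k, i) = (F k *ᵥ v) i :=
  rfl

theorem stackRows_mul_mul_transpose_apply [Fintype n] [NonUnitalNonAssocSemiring α]
    (F : ι → Matrix m n α) (B : Matrix n n α) (k k' : ι) (i j : m) :
    (stackRows F * B * (stackRows F)ᵀ) (k, i) (k', j) = (F k * B * (F k')ᵀ) i j :=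
  rfl

end StackRows

def knockoffLoading {n : Type*} [DecidableEq n] (P : Matrix n n ℝ) (M : ℕ) :
    Matrix (Fin (M + 1) × n) (n ⊕ Fin M × n) ℝ :=
  stackRows <| Fin.cases (fromCols 1 0) fun m =>
    fromCols P ((1 : Matrix (Fin M × n) (Fin M × n) ℝ).submatrix (Prod.mk m) id)

section KnockoffLoading

variable {n : Type*} [Fintype n] [DecidableEq n] {M : ℕ}

theorem knockoffLoading_mulVec_apply_zero (P : Matrix n n ℝ) (v : n ⊕ Fin M × n → ℝ) (j : n) :
    (knockoffLoading P M *ᵥ v) (0, j) = v (.inl j) := by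
  rw [knockoffLoading, stackRows_mulVec_apply]
  simp

theorem knockoffLoading_mulVec_apply_succ (P : Matrix n n ℝ) (v : n ⊕ Fin M × n → ℝ) (m : Fin M)
    (j : n) : (knockoffLoading P M *ᵥ v) (m.succ, j) = (P *ᵥ (v ∘ .inl)) j + v (.inr (m, j)) := by
  rw [knockoffLoading, stackRows_mulVec_apply]
  simp [mulVec, dotProduct, one_apply]

theorem knockoffLoading_mul_fromBlocks_mul_transpose_apply {S C D : Matrix n n ℝ}
    (hS : IsUnit S.det) (hSs : S.IsSymm) (hDs : D.IsSymm) (hC : C = 2 • D - D * S⁻¹ * D)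
    {V : Matrix (Fin M × n) (Fin M × n) ℝ}
    (hV : ∀ m m' i j, V (m, i) (m', j) = if m = m' then C i j else (C - D) i j)
    (m m' : Fin (M + 1)) (i j : n) :
    (knockoffLoading (1 - D * S⁻¹) M * fromBlocks S 0 0 V * (knockoffLoading (1 - D * S⁻¹) M)ᵀ :
      Matrix (Fin (M + 1) × n) (Fin (M + 1) × n) ℝ) (m, i) (m', j)
      = if m = m' then S i j else (S - D) i j := by
  have hJ (k k' : Fin M) : ((1 : Matrix (Fin M × n) (Fin M × n) ℝ).submatrix (Prod.mk k) id * V *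
      ((1 : Matrix (Fin M × n) (Fin M × n) ℝ).submatrix (Prod.mk k') id)ᵀ) i j =
        V (k, i) (k', j) := by
    simp [mul_apply, one_apply]
  have hdiag : S - 2 • D + D * S⁻¹ * D + C = S := by rw [hC]; abel
  have hoff : S - 2 • D + D * S⁻¹ * D + (C - D) = S - D := by rw [hC]; abel
  rw [knockoffLoading, stackRows_mul_mul_transpose_apply]
  cases m using Fin.cases <;> cases m' using Fin.cases <;>
    simp only [Fin.cases_zero, Fin.cases_succ, fromCols_mul_fromBlocks, transpose_fromCols,
      fromCols_mul_fromRows, Matrix.one_mul, Matrix.mul_zero, Matrix.zero_mul, add_zero, zero_add,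
      transpose_one, transpose_zero, Matrix.mul_one, Fin.succ_inj, Fin.succ_ne_zero,
      (Fin.succ_ne_zero _).symm, if_true, if_false, mul_transpose_one_sub_mul_inv hS hSs hDs,
      one_sub_mul_inv_mul_mul_transpose hS hSs hDs]
  · rw [one_sub_mul_inv_mul hS]
  · rw [Matrix.add_apply, hJ, hV]
    split_ifs
    · rw [← Matrix.add_apply, hdiag]
    · rw [← Matrix.add_apply, hoff]

end KnockoffLoading

theorem ghostknockoff_joint_gaussian_general {Ω : Type*} [MeasurableSpace Ω] (μ : Measure Ω)
    (p M : ℕ) (hM : 1 ≤ M)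
    (S : Matrix (Fin p) (Fin p) ℝ) (hS : S.PosDef)
    (s : Fin p → ℝ) (hs : ∀ j, 0 ≤ s j)
    (D : Matrix (Fin p) (Fin p) ℝ) (hD : D = Matrix.diagonal s)
    (hconstraint : ((((M : ℝ) + 1) / (M : ℝ)) • S - D).PosSemidef)
    (C : Matrix (Fin p) (Fin p) ℝ) (hC : C = 2 • D - D * S⁻¹ * D)
    (Z : Fin p → Ω → ℝ)
    (hZ : IsCenteredGaussianWithCov μ Z S)
    (V : Matrix (Fin M × Fin p) (Fin M × Fin p) ℝ)
    (hVblocks : ∀ m m' : Fin M, ∀ i j : Fin p,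
      V (m, i) (m', j) = if m = m' then C i j else (C - D) i j)
    (E : Fin M × Fin p → Ω → ℝ)
    (hE : IsCenteredGaussianWithCov μ E V)
    (hIndep : IndepFun (fun ω => fun j : Fin p => Z j ω)
      (fun ω => fun q : Fin M × Fin p => E q ω) μ)
    (W : Fin (M + 1) × Fin p → Ω → ℝ)
    (hW0 : ∀ j ω, W (0, j) ω = Z j ω)
    (hWm : ∀ (m : Fin M) (j : Fin p) (ω : Ω),
      W (m.succ, j) ω = (∑ i, ((1 : Matrix (Fin p) (Fin p) ℝ) - D * S⁻¹) j i * Z i ω)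
        + E (m, j) ω)
    (G : Matrix (Fin (M + 1) × Fin p) (Fin (M + 1) × Fin p) ℝ)
    (hG : ∀ m m' : Fin (M + 1), ∀ i j : Fin p,
      G (m, i) (m', j) = if m = m' then S i j else (S - D) i j) :
    IsCenteredGaussianWithCov μ W G := by
  have hdet : IsUnit S.det := (isUnit_iff_isUnit_det S).mp hS.isUnit
  have hSs : S.IsSymm := isHermitian_iff_isSymm.mp hS.isHermitian
  have hDs : D.IsSymm := hD ▸ isSymm_diagonal s
  have : Nonempty (Fin M) := ⟨⟨0, hM⟩⟩
  have hVnonneg : ∀ c, 0 ≤ c ⬝ᵥ V *ᵥ c :=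
    dotProduct_mulVec_nonneg_of_knockoff_blocks hS hs hD (by simpa using hconstraint) hC hVblocks
  have hSnonneg (a : Fin p → ℝ) : 0 ≤ a ⬝ᵥ S *ᵥ a := by
    simpa using hS.posSemidef.dotProduct_mulVec_nonneg a
  have hjoint := (hZ.sumElim hE hSnonneg hVnonneg hIndep).mulVec (knockoffLoading (1 - D * S⁻¹) M)
  convert hjoint using 1
  · funext ⟨m, j⟩ ω
    cases m using Fin.cases
    · rw [hW0, knockoffLoading_mulVec_apply_zero]; rfl
    · rw [hWm, knockoffLoading_mulVec_apply_succ]; rfl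
  · ext ⟨m, i⟩ ⟨m', j⟩
    rw [hG, knockoffLoading_mul_fromBlocks_mul_transpose_apply hdet hSs hDs hC hVblocks]

/-- GhostKnockoff joint Gaussian structure: if `Z ~ N(0, Σ)`, `E ~ N(0, V)` independent of
`Z`, with `V` the block matrix with diagonal blocks `C = 2D - DΣ⁻¹D` and off-diagonal blocks
`C - D`, and `P` the `M`-fold vertical stack of `I - DΣ⁻¹`, then the joint vector
`(Z, PZ + E)` is centered Gaussian with covariance having `(0,0)`-block `Σ`, all `(m,m)`-blocks
`Σ` and all blocks between distinct copies equal to `Σ - D`. -/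
theorem ghostknockoff_joint_gaussian {Ω : Type*} [MeasurableSpace Ω] (μ : Measure Ω)
    [IsProbabilityMeasure μ] (p M : ℕ) (hM : 1 ≤ M)
    (S : Matrix (Fin p) (Fin p) ℝ) (hS : S.PosDef)
    (s : Fin p → ℝ) (hs : ∀ j, 0 ≤ s j)
    (D : Matrix (Fin p) (Fin p) ℝ) (hD : D = Matrix.diagonal s)
    (hconstraint : ((((M : ℝ) + 1) / (M : ℝ)) • S - D).PosSemidef)
    (C : Matrix (Fin p) (Fin p) ℝ) (hC : C = 2 • D - D * S⁻¹ * D)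
    (Z : Fin p → Ω → ℝ) (hZmeas : ∀ j, Measurable (Z j))
    (hZ : IsCenteredGaussianWithCov μ Z S)
    (V : Matrix (Fin M × Fin p) (Fin M × Fin p) ℝ)
    (hVblocks : ∀ m m' : Fin M, ∀ i j : Fin p,
      V (m, i) (m', j) = if m = m' then C i j else (C - D) i j)
    (E : Fin M × Fin p → Ω → ℝ) (hEmeas : ∀ q, Measurable (E q))
    (hE : IsCenteredGaussianWithCov μ E V)
    (hIndep : IndepFun (fun ω => fun j : Fin p => Z j ω)
      (fun ω => fun q : Fin M × Fin p => E q ω) μ)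
    (W : Fin (M + 1) × Fin p → Ω → ℝ)
    (hW0 : ∀ j ω, W (0, j) ω = Z j ω)
    (hWm : ∀ (m : Fin M) (j : Fin p) (ω : Ω),
      W (m.succ, j) ω = (∑ i, ((1 : Matrix (Fin p) (Fin p) ℝ) - D * S⁻¹) j i * Z i ω)
        + E (m, j) ω)
    (G : Matrix (Fin (M + 1) × Fin p) (Fin (M + 1) × Fin p) ℝ)
    (hG : ∀ m m' : Fin (M + 1), ∀ i j : Fin p,
      G (m, i) (m', j) = if m = m' then S i j else (S - D) i j) :
    IsCenteredGaussianWithCov μ W G :=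
  ghostknockoff_joint_gaussian_general μ p M hM S hS s hs D hD hconstraint C hC Z hZ V hVblocks E hE
    hIndep W hW0 hWm G hG
end

section
/- A centered Gaussian vector in ℝ^{p(M+1)} with block covariance structure: diagonal blocks Σ and all off-diagonal blocks Σ - D (D diagonal), is exchangeable under simultaneously permuting, for each coordinate j ∈ {1,...,p} independently, the M+1 copy-indices: the covariance matrix is invariant under any such coordinatewise copy-permutation. -/
open Matrix

/-- The block covariance matrix with diagonal (same-copy) blocks `Σ` and all off-diagonal
(distinct-copy) blocks `Σ - D` (`D` diagonal) is invariant under any coordinatewise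
copy-permutation: applying a permutation `σ_j` of the `M+1` copy indices at each coordinate
`j` leaves the covariance matrix unchanged. -/
theorem block_covariance_copy_permutation_invariant (p M : ℕ) (hM : 1 ≤ M)
    (S : Matrix (Fin p) (Fin p) ℝ) (hSsymm : S.IsSymm)
    (s : Fin p → ℝ) (D : Matrix (Fin p) (Fin p) ℝ) (hD : D = Matrix.diagonal s)
    (G : Matrix (Fin (M + 1) × Fin p) (Fin (M + 1) × Fin p) ℝ)
    (hG : ∀ m m' : Fin (M + 1), ∀ i j : Fin p,
      G (m, i) (m', j) = if m = m' then S i j else (S - D) i j) :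
    ∀ σ : Fin p → Equiv.Perm (Fin (M + 1)),
      ∀ q r : Fin (M + 1) × Fin p,
        G (σ q.2 q.1, q.2) (σ r.2 r.1, r.2) = G q r := by
  intro σ ⟨m, i⟩ ⟨m', j⟩
  simp only [hG]
  by_cases hij : i = j
  · subst hij
    simp [Equiv.apply_eq_iff_eq]
  · have hDij : D i j = 0 := by simp [hD, Matrix.diagonal_apply_ne _ hij]
    have : (S - D) i j = S i j := by simp [Matrix.sub_apply, hDij]
    rw [this]
    split <;> split <;> rfl
end
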